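/- arXiv:1306.4288 — 3 statements merged into one kernel-verified Lean document; each statement's English description precedes it below -/
import Mathlib

section
/- Let n ≥ 2 and view the space T of alternating n × n matrices over F as an sl(n,F)-module via a·t = a t + t aᵀ. Then T is an irreducible sl(n,F)-module (over any field F). -/
/-!
Write `A i j = E i j - E j i`; these span the alternating matrices. If a nonzero submodule `W`
is stable under the action, pick `t ∈ W` with `t p q ≠ 0`. For a third index `r`, acting by
`E r q` and then by `E q p` kills everything except `t p q • A q r`; without a third index,
`t` is already a multiple of `A p q`. Finally `E k p` sends `A p q` to `A k q`, so the action
moves a single `A p q ∈ W` to every `A i j`.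
-/

open Matrix

namespace Matrix

variable {ι R : Type*} [CommRing R]

def IsAlternating (t : Matrix ι ι R) : Prop := tᵀ = -t ∧ ∀ i, t i i = 0

theorem IsAlternating.apply_swap {t : Matrix ι ι R} (ht : IsAlternating t) (i j : ι) :
    t j i = -t i j := by
  simpa using congrFun (congrFun ht.1 i) j

theorem IsAlternating.exists_apply_ne_zero {t : Matrix ι ι R} (ht : IsAlternating t)
    (h0 : t ≠ 0) : ∃ p q, p ≠ q ∧ t p q ≠ 0 := by
  by_contra! h
  refine h0 (ext fun p q => ?_)
  by_cases hpq : p = q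
  · subst hpq; exact ht.2 p
  · exact h p q hpq

variable [DecidableEq ι]

def altSingle (i j : ι) : Matrix ι ι R := single i j 1 - single j i 1

theorem altSingle_swap (i j : ι) : (altSingle j i : Matrix ι ι R) = -altSingle i j :=
  (neg_sub _ _).symm

theorem altSingle_apply (i j a b : ι) :
    (altSingle i j : Matrix ι ι R) a b =
      (if i = a ∧ j = b then 1 else 0) - (if j = a ∧ i = b then 1 else 0) := by
  simp [altSingle, single]

theorem IsAlternating.eq_smul_altSingle {t : Matrix ι ι R} (ht : IsAlternating t) {p q : ι}
    (hpq : p ≠ q) (hcover : ∀ r, r = p ∨ r = q) : t = t p q • altSingle p q := by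
  have hqp := ht.apply_swap p q
  ext a b
  rcases hcover a with rfl | rfl <;> rcases hcover b with rfl | rfl <;>
    simp [altSingle_apply, hpq, hpq.symm, ht.2, hqp]

variable [Fintype ι]

-- The derivative at `g = 1` of the congruence action `t ↦ g t gᵀ`.
def congrAct (a t : Matrix ι ι R) : Matrix ι ι R := a * t + t * aᵀ

theorem congrAct_single_altSingle {p q : ι} (k : ι) (hpq : p ≠ q) :
    congrAct (single k p 1) (altSingle p q) = (altSingle k q : Matrix ι ι R) := by
  rw [congrAct, altSingle, transpose_single, mul_sub, sub_mul, single_mul_single_same,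
    single_mul_single_of_ne 1 k p q hpq, single_mul_single_of_ne 1 p q p hpq.symm,
    single_mul_single_same]
  simp only [mul_one, altSingle]
  abel

theorem IsAlternating.congrAct_congrAct_single {t : Matrix ι ι R} (ht : IsAlternating t)
    {p q r : ι} (hrp : r ≠ p) :
    congrAct (single q p 1) (congrAct (single r q 1) t) = t p q • altSingle q r := by
  have hqp_rq : (single q p 1 : Matrix ι ι R) * single r q 1 = 0 :=
    single_mul_single_of_ne 1 q p r hrp.symm 1
  have hqr_pq : (single q r 1 : Matrix ι ι R) * single p q 1 = 0 :=
    single_mul_single_of_ne 1 q r p hrp 1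
  simp only [congrAct, transpose_single, mul_add, add_mul, ← Matrix.mul_assoc, hqp_rq,
    Matrix.mul_assoc t, hqr_pq, zero_mul, mul_zero, single_mul_mul_single, one_mul, mul_one,
    ht.apply_swap p q, zero_add, add_zero]
  simp [altSingle, smul_single, single_neg, sub_eq_add_neg]

theorem sum_smul_altSingle_apply (c : ι → ι → R) (a b : ι) :
    (∑ i, ∑ j, c i j • altSingle i j : Matrix ι ι R) a b = c a b - c b a := by
  simp only [sum_apply, smul_apply]
  simp [altSingle_apply, mul_sub, Finset.sum_sub_distrib, ite_and, Finset.sum_ite_irrel]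

theorem IsAlternating.mem_span_altSingle [LinearOrder ι] {t : Matrix ι ι R}
    (ht : IsAlternating t) :
    t ∈ Submodule.span R (Set.range fun ij : ι × ι => altSingle ij.1 ij.2) := by
  have hsum : t = ∑ i, ∑ j, (if i < j then t i j else 0) • (altSingle i j : Matrix ι ι R) := by
    ext a b
    rw [sum_smul_altSingle_apply]
    rcases lt_trichotomy a b with h | rfl | h
    · simp [h, h.not_gt]
    · simp [ht.2]
    · simp [h, h.not_gt, ht.apply_swap a b]
  rw [hsum]
  exact Submodule.sum_mem _ fun i _ => Submodule.sum_mem _ fun j _ =>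
    Submodule.smul_mem _ _ (Submodule.subset_span ⟨(i, j), rfl⟩)

end Matrix

section Irreducible

variable {ι F : Type*} [DecidableEq ι] [Fintype ι] [Field F] {W : Submodule F (Matrix ι ι F)}
  (hact : ∀ a : Matrix ι ι F, a.trace = 0 → ∀ t ∈ W, congrAct a t ∈ W)
include hact

theorem altSingle_mem_replace_left {p q : ι} (hpq : p ≠ q) (h : altSingle p q ∈ W) (k : ι) :
    altSingle k q ∈ W := by
  rcases eq_or_ne k p with rfl | hkp
  · exact h
  · simpa [congrAct_single_altSingle k hpq] using
      hact _ (trace_single_eq_of_ne k p 1 hkp) _ h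

theorem altSingle_mem_replace_right {p q : ι} (hpq : p ≠ q) (h : altSingle p q ∈ W) (k : ι) :
    altSingle p k ∈ W := by
  have hqp : altSingle q p ∈ W := by
    rw [altSingle_swap]
    exact W.neg_mem h
  rw [altSingle_swap]
  exact W.neg_mem (altSingle_mem_replace_left hact hpq.symm hqp k)

theorem forall_altSingle_mem {p q : ι} (hpq : p ≠ q) (h : altSingle p q ∈ W) (i j : ι) :
    altSingle i j ∈ W := by
  rcases eq_or_ne i q with rfl | hiq
  · rw [altSingle_swap j i]
    exact W.neg_mem (altSingle_mem_replace_left hact hpq h j)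
  · exact altSingle_mem_replace_right hact hiq (altSingle_mem_replace_left hact hpq h i) j

theorem exists_altSingle_mem (hWT : ∀ t ∈ W, IsAlternating t) (hW : W ≠ ⊥) :
    ∃ p q : ι, p ≠ q ∧ altSingle p q ∈ W := by
  obtain ⟨t, htW, ht0⟩ := W.exists_mem_ne_zero_of_ne_bot hW
  obtain ⟨p, q, hpq, htpq⟩ := (hWT t htW).exists_apply_ne_zero ht0
  by_cases hr : ∃ r, r ≠ p ∧ r ≠ q
  · obtain ⟨r, hrp, hrq⟩ := hr
    refine ⟨q, r, hrq.symm, ?_⟩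
    have hmem := hact _ (trace_single_eq_of_ne q p 1 hpq.symm) _
      (hact _ (trace_single_eq_of_ne r q 1 hrq) t htW)
    rw [(hWT t htW).congrAct_congrAct_single hrp] at hmem
    simpa [smul_smul, inv_mul_cancel₀ htpq] using W.smul_mem (t p q)⁻¹ hmem
  · refine ⟨p, q, hpq, ?_⟩
    have hcover (r : ι) : r = p ∨ r = q := by
      by_contra! h
      exact hr ⟨r, h⟩
    rw [(hWT t htW).eq_smul_altSingle hpq hcover] at htW
    simpa [smul_smul, inv_mul_cancel₀ htpq] using W.smul_mem (t p q)⁻¹ htW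

end Irreducible

theorem stmt_13_general (F : Type*) [Field F] (n : ℕ)
    (W : Submodule F (Matrix (Fin n) (Fin n) F))
    (hWT : ∀ t ∈ W, tᵀ = -t ∧ ∀ i, t i i = 0)
    (hact : ∀ a : Matrix (Fin n) (Fin n) F, a.trace = 0 →
      ∀ t ∈ W, a * t + t * aᵀ ∈ W)
    (hW : W ≠ ⊥) :
    ∀ t : Matrix (Fin n) (Fin n) F, (tᵀ = -t ∧ ∀ i, t i i = 0) → t ∈ W := by
  intro t ht
  obtain ⟨p, q, hpq, hmem⟩ := exists_altSingle_mem hact hWT hW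
  refine Submodule.span_le.2 ?_ (IsAlternating.mem_span_altSingle ht)
  rintro _ ⟨⟨i, j⟩, rfl⟩
  exact forall_altSingle_mem hact hpq hmem i j

theorem stmt_13 (F : Type*) [Field F] (n : ℕ) (hn : 2 ≤ n)
    (W : Submodule F (Matrix (Fin n) (Fin n) F))
    (hWT : ∀ t ∈ W, tᵀ = -t ∧ ∀ i, t i i = 0)
    (hact : ∀ a : Matrix (Fin n) (Fin n) F, a.trace = 0 →
      ∀ t ∈ W, a * t + t * aᵀ ∈ W)
    (hW : W ≠ ⊥) :
    ∀ t : Matrix (Fin n) (Fin n) F, (tᵀ = -t ∧ ∀ i, t i i = 0) → t ∈ W :=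
  stmt_13_general F n W hWT hact hW
end

section
/- Let char F ≠ 2, n ≥ 2, and view the space S of symmetric n × n matrices as an sl(n,F)-module via a·s = a s + s aᵀ. Then S is an irreducible sl(n,F)-module. -/
/-!
Write `E i j` for the matrix unit. Ror `i ≠ j`, acting by `E i j` moves the entry `s i j` of a
symmetric `s` to the diagonal entry `2 s i j`, and acting twice sends `s` to `2 s j j • E i i`.
So a nonzero invariant subspace contains some `E k k`; a second index then gives all of them,
acting once more gives every `E i j + E j i`, and these span the symmetric matrices because
`2` is invertible.
-/

open Matrix

namespace Matrix

variable {R F ι : Type*} [Fintype ι] [DecidableEq ι]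

section Semiring

variable [Semiring R]

lemma single_mul_add_mul_single_apply_same (i j : ι) (s : Matrix ι ι R) :
    (single i j 1 * s + s * single j i 1 : Matrix ι ι R) i i = s j i + s i j := by
  simp

lemma single_mul_add_mul_single_twice {i j : ι} (hij : i ≠ j) (s : Matrix ι ι R) :
    single i j 1 * (single i j 1 * s + s * single j i 1)
      + (single i j 1 * s + s * single j i 1) * single j i 1
      = (2 * s j j) • single i i (1 : R) := by
  rw [mul_add, add_mul, ← mul_assoc, ← mul_assoc, mul_assoc s,
    single_mul_single_of_ne (1 : R) i j i hij.symm, single_mul_single_of_ne (1 : R) j i j hij,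
    single_mul_mul_single, zero_mul, mul_zero, zero_add, add_zero, ← two_smul R, smul_single]
  simp

lemma add_transpose_eq_sum_single (s : Matrix ι ι R) :
    s + sᵀ = ∑ i, ∑ j, s i j • (single i j 1 + single j i 1) := by
  have hs : ∑ i, ∑ j, s i j • single i j (1 : R) = s := by
    conv_rhs => rw [matrix_eq_sum_single s]
    simp [smul_single]
  have hsT : ∑ i, ∑ j, s i j • single j i (1 : R) = sᵀ := by
    rw [Finset.sum_comm]
    conv_rhs => rw [matrix_eq_sum_single sᵀ]
    simp [smul_single]
  simp only [smul_add, Finset.sum_add_distrib, hs, hsT]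

end Semiring

section Invariant

variable [DivisionRing F] {W : Submodule F (Matrix ι ι F)}

lemma exists_mem_apply_self_ne_zero (h2 : (2 : F) ≠ 0) (hWS : ∀ s ∈ W, sᵀ = s)
    (hact : ∀ i j, i ≠ j → ∀ s ∈ W, single i j 1 * s + s * single j i 1 ∈ W) (hW : W ≠ ⊥) :
    ∃ t ∈ W, ∃ l, t l l ≠ 0 := by
  obtain ⟨s, hsW, hs⟩ := (Submodule.ne_bot_iff W).mp hW
  obtain ⟨i, j, hsij⟩ : ∃ i j, s i j ≠ 0 := by
    by_contra! h
    exact hs (ext h)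
  by_cases hij : i = j
  · exact ⟨s, hsW, i, hij ▸ hsij⟩
  refine ⟨_, hact i j hij s hsW, i, ?_⟩
  have hsym : s j i = s i j := by rw [← transpose_apply s i j, hWS s hsW]
  rw [single_mul_add_mul_single_apply_same, hsym, ← two_mul]
  exact mul_ne_zero h2 hsij

lemma single_mem_of_apply_self_ne_zero (h2 : (2 : F) ≠ 0)
    (hact : ∀ i j, i ≠ j → ∀ s ∈ W, single i j 1 * s + s * single j i 1 ∈ W)
    {t : Matrix ι ι F} (ht : t ∈ W) {l : ι} (htl : t l l ≠ 0) {k : ι} (hkl : k ≠ l) :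
    single k k 1 ∈ W := by
  have h := hact k l hkl _ (hact k l hkl t ht)
  rw [single_mul_add_mul_single_twice hkl] at h
  have h' := W.smul_mem (2 * t l l)⁻¹ h
  rwa [smul_smul, inv_mul_cancel₀ (mul_ne_zero h2 htl), one_smul] at h'

lemma single_self_mem [Nontrivial ι] (h2 : (2 : F) ≠ 0) (hWS : ∀ s ∈ W, sᵀ = s)
    (hact : ∀ i j, i ≠ j → ∀ s ∈ W, single i j 1 * s + s * single j i 1 ∈ W) (hW : W ≠ ⊥)
    (k : ι) : single k k 1 ∈ W := by
  obtain ⟨t, ht, l, htl⟩ := exists_mem_apply_self_ne_zero h2 hWS hact hW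
  obtain ⟨m, hml⟩ := exists_ne l
  have hm : single m m 1 ∈ W := single_mem_of_apply_self_ne_zero h2 hact ht htl hml
  by_cases hkl : k = l
  · subst hkl
    exact single_mem_of_apply_self_ne_zero h2 hact hm (by simp) hml.symm
  · exact single_mem_of_apply_self_ne_zero h2 hact ht htl hkl

lemma single_add_single_mem
    (hact : ∀ i j, i ≠ j → ∀ s ∈ W, single i j 1 * s + s * single j i 1 ∈ W)
    (hdiag : ∀ k, single k k 1 ∈ W) (i j : ι) : single i j 1 + single j i 1 ∈ W := by
  by_cases hij : i = j
  · subst hij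
    exact W.add_mem (hdiag i) (hdiag i)
  · simpa using hact i j hij _ (hdiag j)

lemma mem_of_transpose_eq_self (h2 : (2 : F) ≠ 0)
    (hsum : ∀ i j, single i j 1 + single j i 1 ∈ W) {s : Matrix ι ι F} (hs : sᵀ = s) :
    s ∈ W := by
  have h : (2 : F) • s ∈ W := by
    rw [two_smul]
    nth_rw 2 [← hs]
    rw [add_transpose_eq_sum_single]
    exact W.sum_mem fun i _ => W.sum_mem fun j _ => W.smul_mem _ (hsum i j)
  have h' := W.smul_mem (2 : F)⁻¹ h
  rwa [smul_smul, inv_mul_cancel₀ h2, one_smul] at h'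

end Invariant

end Matrix

theorem stmt_14 (F : Type*) [Field F] (hchar : ringChar F ≠ 2) (n : ℕ) (hn : 2 ≤ n)
    (W : Submodule F (Matrix (Fin n) (Fin n) F))
    (hWS : ∀ s ∈ W, sᵀ = s)
    (hact : ∀ a : Matrix (Fin n) (Fin n) F, a.trace = 0 →
      ∀ s ∈ W, a * s + s * aᵀ ∈ W)
    (hW : W ≠ ⊥) :
    ∀ s : Matrix (Fin n) (Fin n) F, sᵀ = s → s ∈ W := by
  have h2 : (2 : F) ≠ 0 := Ring.two_ne_zero hchar
  have : Nontrivial (Fin n) := Fin.nontrivial_iff_two_le.mpr hn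
  have hactE : ∀ i j, i ≠ j → ∀ s ∈ W, single i j 1 * s + s * single j i 1 ∈ W :=
    fun i j hij s hs => by
      simpa [transpose_single] using hact _ (trace_single_eq_of_ne i j 1 hij) s hs
  have hdiag := single_self_mem h2 hWS hactE hW
  exact fun s hs => mem_of_transpose_eq_self h2 (single_add_single_mem hactE hdiag) hs
end

section
/- Let char F = 2, n ≥ 1, and J the standard symplectic 2n × 2n matrix. Then the derived algebra L(J)^(1) = [L(J), L(J)] consists of all block matrices (A B; C Aᵀ) with A ∈ gl(n,F) and B, C alternating, and the second derived algebra L(J)^(2) consists of all such matrices with additionally trace(A) = 0. Consequently the quotient Lie algebra L(J)/L(J)^(2) is isomorphic to the Heisenberg Lie algebra of dimension 2n+1. -/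
/-!
In characteristic 2 the commutator of `(A B; C Aᵀ)` and `(A' B'; C' A'ᵀ)` in `L(J)` has
off-diagonal blocks of the form `N + Nᵀ`, hence alternating, and a top-left block of trace
`tr(BC') + tr(B'C)`. For symmetric `B, C'` the off-diagonal entries contribute to `tr(BC')` in
equal pairs, so `tr(BC') = ∑ Bᵢᵢ C'ᵢᵢ`: this vanishes when `B` is alternating, and it is the
Heisenberg bracket of `(diag B, diag C, tr A)`. Conversely every alternating matrix is some
`N + Nᵀ`, the bracket of `(N 0; 0 Nᵀ)` with `(0 1; 0 0)`; matrix units are products of two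
symmetric matrices, and traceless matrices are spanned by commutators. So brackets of
block-diagonal and block-off-diagonal elements fill out both derived algebras.
-/

open Matrix Submodule

namespace SymplecticCharTwo

section Alternating

variable {ι R : Type*} [CommRing R]

variable (ι R) in
def alternating : Submodule R (Matrix ι ι R) where
  carrier := {B | Bᵀ = B ∧ ∀ i, B i i = 0}
  add_mem' := fun ⟨hB, hB₀⟩ ⟨hC, hC₀⟩ =>
    ⟨by rw [transpose_add, hB, hC], fun i => by simp [hB₀, hC₀]⟩
  zero_mem' := ⟨transpose_zero, fun _ => rfl⟩
  smul_mem' := fun c _ ⟨hB, hB₀⟩ => ⟨by rw [transpose_smul, hB], fun i => by simp [hB₀]⟩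

lemma exists_eq_add_transpose_of_mem_alternating {B : Matrix ι ι R}
    (hB : B ∈ alternating ι R) : ∃ N, B = N + Nᵀ := by
  classical
  let _ : LinearOrder ι := IsWellOrder.linearOrder WellOrderingRel
  refine ⟨of fun i j => if i < j then B i j else 0, ?_⟩
  ext i j
  rcases lt_trichotomy i j with h | rfl | h
  · simp [h, h.not_gt]
  · simp [hB.2]
  · simpa [h, h.not_gt] using (congr_fun (congr_fun hB.1 i) j).symm

variable [CharP R 2]

lemma matrix_sub_eq_add {m n : Type*} (M N : Matrix m n R) : M - N = M + N := by
  ext i j; exact CharTwo.sub_eq_add _ _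

lemma matrix_add_self {m n : Type*} (M : Matrix m n R) : M + M = 0 := by
  ext i j; exact CharTwo.add_self_eq_zero _

lemma add_transpose_mem_alternating (N : Matrix ι ι R) : N + Nᵀ ∈ alternating ι R :=
  ⟨by rw [transpose_add, transpose_transpose, add_comm],
    fun i => CharTwo.add_self_eq_zero (N i i)⟩

variable [Fintype ι]

lemma trace_mul_eq_zero_of_mem_alternating {B C : Matrix ι ι R} (hB : B ∈ alternating ι R)
    (hC : Cᵀ = C) : trace (B * C) = 0 := by
  obtain ⟨N, rfl⟩ := exists_eq_add_transpose_of_mem_alternating hB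
  have : trace (Nᵀ * C) = trace (N * C) := by
    rw [← trace_transpose, transpose_mul, transpose_transpose, hC, trace_mul_comm]
  rw [add_mul, trace_add, this, CharTwo.add_self_eq_zero]

lemma trace_mul_eq_sum_diag_mul_diag [DecidableEq ι] {B C : Matrix ι ι R} (hB : Bᵀ = B)
    (hC : Cᵀ = C) : trace (B * C) = ∑ i, B i i * C i i := by
  have hB' : B - diagonal B.diag ∈ alternating ι R :=
    ⟨by rw [transpose_sub, hB, diagonal_transpose], fun i => by simp⟩
  calc trace (B * C) = trace ((B - diagonal B.diag) * C) + trace (diagonal B.diag * C) := by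
        rw [← trace_add, ← add_mul, sub_add_cancel]
    _ = ∑ i, B i i * C i i := by
        rw [trace_mul_eq_zero_of_mem_alternating hB' hC, zero_add]
        simp [trace, diagonal_mul]

end Alternating

section Commutators

variable {m R : Type*} [Fintype m] [CommRing R]

def commutatorSpan (S : Set (Matrix m m R)) : Submodule R (Matrix m m R) :=
  span R {Z | ∃ X ∈ S, ∃ Y ∈ S, Z = X * Y - Y * X}

lemma commutator_mem_commutatorSpan {S : Set (Matrix m m R)} {X Y : Matrix m m R} (hX : X ∈ S)
    (hY : Y ∈ S) : X * Y - Y * X ∈ commutatorSpan S :=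
  subset_span ⟨X, hX, Y, hY, rfl⟩

lemma mem_commutatorSpan_univ_of_trace_eq_zero [DecidableEq m] {A : Matrix m m R}
    (hA : A.trace = 0) : A ∈ commutatorSpan (Set.univ : Set (Matrix m m R)) := by
  rcases isEmpty_or_nonempty m with hm | ⟨⟨z⟩⟩
  · simp [Subsingleton.elim A 0]
  suffices h : ∀ A : Matrix m m R, A - A.trace • single z z 1 ∈ commutatorSpan Set.univ by
    simpa [hA] using h A
  intro A
  induction A using Matrix.induction_on' with
  | h_zero => simp
  | h_add p q hp hq =>
    rw [trace_add, add_smul, add_sub_add_comm]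
    exact add_mem hp hq
  | h_std_basis i j c =>
    by_cases hij : i = j
    · subst hij
      convert commutator_mem_commutatorSpan (Set.mem_univ (single i z c))
        (Set.mem_univ (single z i (1 : R))) using 1
      simp [single_mul_single_same, smul_single]
    · convert commutator_mem_commutatorSpan (Set.mem_univ (single i i (1 : R)))
        (Set.mem_univ (single i j c)) using 1
      simp [trace_single_eq_of_ne (h := hij), single_mul_single_of_ne _ _ _ _ (Ne.symm hij)]

end Commutators

section Blocks

variable {ι R : Type*} [CommRing R]

local notation "M₂" => Matrix (ι ⊕ ι) (ι ⊕ ι) R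

def altBlocks (p : Submodule R (Matrix ι ι R)) : Submodule R M₂ where
  carrier := {Z | ∃ A B C, Z = fromBlocks A B C Aᵀ ∧
    B ∈ alternating ι R ∧ C ∈ alternating ι R ∧ A ∈ p}
  add_mem' := by
    rintro _ _ ⟨A, B, C, rfl, hB, hC, hA⟩ ⟨A', B', C', rfl, hB', hC', hA'⟩
    exact ⟨A + A', B + B', C + C', by rw [fromBlocks_add, transpose_add],
      add_mem hB hB', add_mem hC hC', add_mem hA hA'⟩
  zero_mem' := ⟨0, 0, 0, by simp, zero_mem _, zero_mem _, zero_mem _⟩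
  smul_mem' := by
    rintro c _ ⟨A, B, C, rfl, hB, hC, hA⟩
    exact ⟨c • A, c • B, c • C, by rw [fromBlocks_smul, transpose_smul],
      smul_mem _ c hB, smul_mem _ c hC, smul_mem _ c hA⟩

lemma mem_altBlocks_top_iff {Z : M₂} : Z ∈ altBlocks ⊤ ↔
    ∃ A B C, Z = fromBlocks A B C Aᵀ ∧ B ∈ alternating ι R ∧ C ∈ alternating ι R := by
  simp [altBlocks]

variable (ι R) in
def diagBlock : Matrix ι ι R →ₗ[R] M₂ where
  toFun A := fromBlocks A 0 0 Aᵀ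
  map_add' A A' := by rw [fromBlocks_add, transpose_add, add_zero]
  map_smul' c A := by rw [fromBlocks_smul, transpose_smul, smul_zero]; rfl

variable (ι R) in
def upperBlock : Matrix ι ι R →ₗ[R] M₂ where
  toFun B := fromBlocks 0 B 0 0
  map_add' B B' := by rw [fromBlocks_add, add_zero]
  map_smul' c B := by rw [fromBlocks_smul, smul_zero]; rfl

variable (ι R) in
def lowerBlock : Matrix ι ι R →ₗ[R] M₂ where
  toFun C := fromBlocks 0 0 C 0
  map_add' C C' := by rw [fromBlocks_add, add_zero]
  map_smul' c C := by rw [fromBlocks_smul, smul_zero]; rfl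

lemma fromBlocks_eq_diagBlock_add (A B C : Matrix ι ι R) :
    fromBlocks A B C Aᵀ = diagBlock ι R A + upperBlock ι R B + lowerBlock ι R C := by
  simp [diagBlock, upperBlock, lowerBlock, fromBlocks_add]

lemma altBlocks_le {p : Submodule R (Matrix ι ι R)} {S : Submodule R M₂}
    (hA : ∀ A ∈ p, diagBlock ι R A ∈ S)
    (hB : ∀ B ∈ alternating ι R, upperBlock ι R B ∈ S)
    (hC : ∀ C ∈ alternating ι R, lowerBlock ι R C ∈ S) : altBlocks p ≤ S := by
  rintro _ ⟨A, B, C, rfl, hB', hC', hA'⟩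
  rw [fromBlocks_eq_diagBlock_add]
  exact add_mem (add_mem (hA A hA') (hB B hB')) (hC C hC')

lemma diagBlock_mem_altBlocks_top (A : Matrix ι ι R) : diagBlock ι R A ∈ altBlocks ⊤ :=
  ⟨A, 0, 0, rfl, zero_mem _, zero_mem _, trivial⟩

lemma upperBlock_mem_altBlocks_top {B : Matrix ι ι R} (hB : B ∈ alternating ι R) :
    upperBlock ι R B ∈ altBlocks ⊤ :=
  ⟨0, B, 0, by simp [upperBlock], hB, zero_mem _, trivial⟩

lemma lowerBlock_mem_altBlocks_top {C : Matrix ι ι R} (hC : C ∈ alternating ι R) :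
    lowerBlock ι R C ∈ altBlocks ⊤ :=
  ⟨0, 0, C, by simp [lowerBlock], zero_mem _, hC, trivial⟩

section

variable [Fintype ι] [CharP R 2]

lemma fromBlocks_commutator {A B C A' B' C' : Matrix ι ι R} (hB : Bᵀ = B) (hC : Cᵀ = C)
    (hB' : B'ᵀ = B') (hC' : C'ᵀ = C') :
    fromBlocks A B C Aᵀ * fromBlocks A' B' C' A'ᵀ -
        fromBlocks A' B' C' A'ᵀ * fromBlocks A B C Aᵀ =
      fromBlocks (A * A' + A' * A + B * C' + B' * C)
        (A * B' + (A * B')ᵀ + (A' * B + (A' * B)ᵀ))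
        (C * A' + (C * A')ᵀ + (C' * A + (C' * A)ᵀ))
        (A * A' + A' * A + B * C' + B' * C)ᵀ := by
  rw [fromBlocks_multiply, fromBlocks_multiply, matrix_sub_eq_add, fromBlocks_add]
  simp only [transpose_add, transpose_mul, hB, hC, hB', hC']
  congr 1 <;> abel

lemma diagBlock_commutator_diagBlock (A A' : Matrix ι ι R) :
    diagBlock ι R A * diagBlock ι R A' - diagBlock ι R A' * diagBlock ι R A =
      diagBlock ι R (A * A' - A' * A) := by
  simp [diagBlock, fromBlocks_commutator transpose_zero transpose_zero transpose_zero
    transpose_zero, matrix_sub_eq_add]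

lemma diagBlock_commutator_upperBlock (A : Matrix ι ι R) {B : Matrix ι ι R} (hB : Bᵀ = B) :
    diagBlock ι R A * upperBlock ι R B - upperBlock ι R B * diagBlock ι R A =
      upperBlock ι R (A * B + (A * B)ᵀ) := by
  have := fromBlocks_commutator (A := A) (A' := 0) (B := 0) (C := 0) (C' := 0) transpose_zero
    transpose_zero hB transpose_zero
  simpa [diagBlock, upperBlock] using this

lemma diagBlock_commutator_lowerBlock (A : Matrix ι ι R) {C : Matrix ι ι R} (hC : Cᵀ = C) :
    diagBlock ι R A * lowerBlock ι R C - lowerBlock ι R C * diagBlock ι R A =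
      lowerBlock ι R (C * A + (C * A)ᵀ) := by
  have := fromBlocks_commutator (A := A) (A' := 0) (B := 0) (C := 0) (B' := 0) transpose_zero
    transpose_zero transpose_zero hC
  simpa [diagBlock, lowerBlock] using this

lemma upperBlock_commutator_lowerBlock {B C : Matrix ι ι R} (hB : Bᵀ = B) (hC : Cᵀ = C) :
    upperBlock ι R B * lowerBlock ι R C - lowerBlock ι R C * upperBlock ι R B =
      diagBlock ι R (B * C) := by
  have := fromBlocks_commutator (A := 0) (A' := 0) (C := 0) (B' := 0) hB transpose_zero
    transpose_zero hC
  simpa [diagBlock, upperBlock, lowerBlock] using this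

lemma commutator_mem_altBlocks_ker_trace {X Y : M₂} (hX : X ∈ altBlocks ⊤)
    (hY : Y ∈ altBlocks ⊤) :
    X * Y - Y * X ∈ altBlocks (LinearMap.ker (traceLinearMap ι R R)) := by
  obtain ⟨A, B, C, rfl, hB, hC, -⟩ := hX
  obtain ⟨A', B', C', rfl, hB', hC', -⟩ := hY
  rw [fromBlocks_commutator hB.1 hC.1 hB'.1 hC'.1]
  refine ⟨_, _, _, rfl,
    add_mem (add_transpose_mem_alternating _) (add_transpose_mem_alternating _),
    add_mem (add_transpose_mem_alternating _) (add_transpose_mem_alternating _), ?_⟩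
  change trace _ = 0
  rw [trace_add, trace_add, trace_add, trace_mul_comm A' A, CharTwo.add_self_eq_zero, zero_add,
    trace_mul_eq_zero_of_mem_alternating hB hC'.1, trace_mul_eq_zero_of_mem_alternating hB' hC.1,
    add_zero]

end

variable [Fintype ι] [DecidableEq ι]

variable (ι R) in
def J : Matrix (ι ⊕ ι) (ι ⊕ ι) R := fromBlocks 0 1 1 0

variable (ι R) in
def LJ : Set (Matrix (ι ⊕ ι) (ι ⊕ ι) R) := {X | Xᵀ * J ι R = J ι R * X}

lemma fromBlocks_mem_LJ_iff {A B C D : Matrix ι ι R} :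
    fromBlocks A B C D ∈ LJ ι R ↔ D = Aᵀ ∧ Bᵀ = B ∧ Cᵀ = C := by
  simp only [LJ, J, Set.mem_ofPred_eq, fromBlocks_transpose, fromBlocks_multiply, fromBlocks_inj,
    Matrix.mul_zero, Matrix.mul_one, Matrix.zero_mul, Matrix.one_mul, add_zero, zero_add]
  constructor
  · rintro ⟨hC, hDA, -, hB⟩
    exact ⟨hDA.symm, hB, hC⟩
  · rintro ⟨rfl, hB, hC⟩
    exact ⟨hC, rfl, transpose_transpose A, hB⟩

lemma mem_LJ_iff {X : M₂} :
    X ∈ LJ ι R ↔ ∃ A B C, X = fromBlocks A B C Aᵀ ∧ Bᵀ = B ∧ Cᵀ = C := by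
  constructor
  · intro hX
    rw [← fromBlocks_toBlocks X, fromBlocks_mem_LJ_iff] at hX
    obtain ⟨hD, hB, hC⟩ := hX
    exact ⟨_, _, _, by rw [← hD, fromBlocks_toBlocks], hB, hC⟩
  · rintro ⟨A, B, C, rfl, hB, hC⟩
    exact fromBlocks_mem_LJ_iff.2 ⟨rfl, hB, hC⟩

lemma diagBlock_mem_LJ (A : Matrix ι ι R) : diagBlock ι R A ∈ LJ ι R :=
  mem_LJ_iff.2 ⟨A, 0, 0, rfl, transpose_zero, transpose_zero⟩

lemma upperBlock_mem_LJ {B : Matrix ι ι R} (hB : Bᵀ = B) : upperBlock ι R B ∈ LJ ι R :=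
  mem_LJ_iff.2 ⟨0, B, 0, by simp [upperBlock], hB, transpose_zero⟩

lemma lowerBlock_mem_LJ {C : Matrix ι ι R} (hC : Cᵀ = C) : lowerBlock ι R C ∈ LJ ι R :=
  mem_LJ_iff.2 ⟨0, 0, C, by simp [lowerBlock], transpose_zero, hC⟩

lemma exists_symm_mul_symm_eq_single (i j : ι) (c : R) :
    ∃ B C : Matrix ι ι R, Bᵀ = B ∧ Cᵀ = C ∧ B * C = single i j c := by
  by_cases hij : i = j
  · subst hij
    exact ⟨1, single i i c, transpose_one, transpose_single .., Matrix.one_mul _⟩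
  · refine ⟨single i i 1, single i j c + single j i c, transpose_single .., ?_, ?_⟩
    · rw [transpose_add, transpose_single, transpose_single, add_comm]
    · simp [Matrix.mul_add, single_mul_single_of_ne _ _ _ _ hij]

variable [CharP R 2]

lemma commutator_mem_altBlocks_top {X Y : M₂} (hX : X ∈ LJ ι R) (hY : Y ∈ LJ ι R) :
    X * Y - Y * X ∈ altBlocks ⊤ := by
  obtain ⟨A, B, C, rfl, hB, hC⟩ := mem_LJ_iff.1 hX
  obtain ⟨A', B', C', rfl, hB', hC'⟩ := mem_LJ_iff.1 hY
  rw [fromBlocks_commutator hB hC hB' hC']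
  exact ⟨_, _, _, rfl,
    add_mem (add_transpose_mem_alternating _) (add_transpose_mem_alternating _),
    add_mem (add_transpose_mem_alternating _) (add_transpose_mem_alternating _), trivial⟩

lemma forall_alternating_mem_of_single {M : Type*} [AddCommGroup M] [Module R M]
    (f : Matrix ι ι R →ₗ[R] M) {S : Submodule R M}
    (h : ∀ i j c, i ≠ j → f (single i j c + single j i c) ∈ S) :
    ∀ B ∈ alternating ι R, f B ∈ S := by
  intro B hB
  obtain ⟨N, rfl⟩ := exists_eq_add_transpose_of_mem_alternating hB
  induction N using Matrix.induction_on' with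
  | h_zero => simp
  | h_add p q hp hq =>
    rw [transpose_add, add_add_add_comm, map_add]
    exact add_mem (hp (add_transpose_mem_alternating p)) (hq (add_transpose_mem_alternating q))
  | h_std_basis i j c =>
    rw [transpose_single]
    by_cases hij : i = j
    · subst hij
      rw [matrix_add_self, map_zero]
      exact zero_mem S
    · exact h i j c hij

lemma diagBlock_mem_commutatorSpan_LJ (A : Matrix ι ι R) :
    diagBlock ι R A ∈ commutatorSpan (LJ ι R) := by
  induction A using Matrix.induction_on' with
  | h_zero => simp
  | h_add p q hp hq =>
    rw [map_add]
    exact add_mem hp hq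
  | h_std_basis i j c =>
    obtain ⟨B, C, hB, hC, hBC⟩ := exists_symm_mul_symm_eq_single i j c
    rw [← hBC, ← upperBlock_commutator_lowerBlock hB hC]
    exact commutator_mem_commutatorSpan (upperBlock_mem_LJ hB) (lowerBlock_mem_LJ hC)

lemma upperBlock_mem_commutatorSpan_LJ {B : Matrix ι ι R} (hB : B ∈ alternating ι R) :
    upperBlock ι R B ∈ commutatorSpan (LJ ι R) := by
  obtain ⟨N, rfl⟩ := exists_eq_add_transpose_of_mem_alternating hB
  have h := diagBlock_commutator_upperBlock N (transpose_one (n := ι) (α := R))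
  rw [Matrix.mul_one] at h
  rw [← h]
  exact commutator_mem_commutatorSpan (diagBlock_mem_LJ N) (upperBlock_mem_LJ transpose_one)

lemma lowerBlock_mem_commutatorSpan_LJ {C : Matrix ι ι R} (hC : C ∈ alternating ι R) :
    lowerBlock ι R C ∈ commutatorSpan (LJ ι R) := by
  obtain ⟨N, rfl⟩ := exists_eq_add_transpose_of_mem_alternating hC
  have h := diagBlock_commutator_lowerBlock N (transpose_one (n := ι) (α := R))
  rw [Matrix.one_mul] at h
  rw [← h]
  exact commutator_mem_commutatorSpan (diagBlock_mem_LJ N) (lowerBlock_mem_LJ transpose_one)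

theorem commutatorSpan_LJ_eq : commutatorSpan (LJ ι R) = altBlocks ⊤ :=
  le_antisymm (span_le.2 fun _ ⟨_, hX, _, hY, hZ⟩ => hZ ▸ commutator_mem_altBlocks_top hX hY)
    (altBlocks_le (fun A _ => diagBlock_mem_commutatorSpan_LJ A)
      (fun _ => upperBlock_mem_commutatorSpan_LJ) (fun _ => lowerBlock_mem_commutatorSpan_LJ))

lemma diagBlock_mem_commutatorSpan_altBlocks {A : Matrix ι ι R} (hA : A.trace = 0) :
    diagBlock ι R A ∈ commutatorSpan (altBlocks ⊤ : Submodule R M₂) := by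
  have h : commutatorSpan (Set.univ : Set (Matrix ι ι R)) ≤
      (commutatorSpan (altBlocks ⊤ : Submodule R M₂)).comap (diagBlock ι R) := by
    refine span_le.2 fun _ ⟨X, _, Y, _, hZ⟩ => ?_
    rw [hZ, SetLike.mem_coe, mem_comap, ← diagBlock_commutator_diagBlock]
    exact commutator_mem_commutatorSpan (diagBlock_mem_altBlocks_top X)
      (diagBlock_mem_altBlocks_top Y)
  exact h (mem_commutatorSpan_univ_of_trace_eq_zero hA)

lemma upperBlock_mem_commutatorSpan_altBlocks {B : Matrix ι ι R} (hB : B ∈ alternating ι R) :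
    upperBlock ι R B ∈ commutatorSpan (altBlocks ⊤ : Submodule R M₂) := by
  refine forall_alternating_mem_of_single _ (fun i j c hij => ?_) B hB
  have hS := add_transpose_mem_alternating (single i j c)
  rw [transpose_single] at hS
  have h := diagBlock_commutator_upperBlock (single i i 1) hS.1
  simp only [Matrix.mul_add, single_mul_single_same, one_mul,
    single_mul_single_of_ne _ _ _ _ hij, add_zero, transpose_single] at h
  rw [← h]
  exact commutator_mem_commutatorSpan (diagBlock_mem_altBlocks_top _)
    (upperBlock_mem_altBlocks_top hS)

lemma lowerBlock_mem_commutatorSpan_altBlocks {C : Matrix ι ι R} (hC : C ∈ alternating ι R) :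
    lowerBlock ι R C ∈ commutatorSpan (altBlocks ⊤ : Submodule R M₂) := by
  refine forall_alternating_mem_of_single _ (fun i j c hij => ?_) C hC
  have hS := add_transpose_mem_alternating (single i j c)
  rw [transpose_single] at hS
  have h := diagBlock_commutator_lowerBlock (single j j 1) hS.1
  simp only [Matrix.add_mul, single_mul_single_same, mul_one,
    single_mul_single_of_ne _ _ _ _ hij, add_zero, transpose_single] at h
  rw [← h]
  exact commutator_mem_commutatorSpan (diagBlock_mem_altBlocks_top _)
    (lowerBlock_mem_altBlocks_top hS)

theorem commutatorSpan_altBlocks_top_eq :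
    commutatorSpan (altBlocks ⊤ : Submodule R M₂) =
      altBlocks (LinearMap.ker (traceLinearMap ι R R)) :=
  le_antisymm
    (span_le.2 fun _ ⟨_, hX, _, hY, hZ⟩ => hZ ▸ commutator_mem_altBlocks_ker_trace hX hY)
    (altBlocks_le (fun _ => diagBlock_mem_commutatorSpan_altBlocks)
      (fun _ => upperBlock_mem_commutatorSpan_altBlocks)
      (fun _ => lowerBlock_mem_commutatorSpan_altBlocks))

end Blocks

section Heisenberg

variable {ι R : Type*} [Fintype ι] [CommRing R]

variable (ι R) in
/-- On `L(J)` this is the quotient map onto `h(n)`, in the coordinates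
`(p, q, c) = ∑ pᵢ uᵢ + ∑ qᵢ vᵢ + c z`. -/
def toHeisenberg : Matrix (ι ⊕ ι) (ι ⊕ ι) R →ₗ[R] (ι → R) × (ι → R) × R where
  toFun X := (fun i => X (.inl i) (.inr i), fun i => X (.inr i) (.inl i),
    ∑ i, X (.inl i) (.inl i))
  map_add' X Y := by simp only [Matrix.add_apply, Finset.sum_add_distrib]; rfl
  map_smul' c X := by simp only [Matrix.smul_apply, RingHom.id_apply, ← Finset.smul_sum]; rfl

lemma toHeisenberg_fromBlocks (A B C D : Matrix ι ι R) :
    toHeisenberg ι R (fromBlocks A B C D) = (B.diag, C.diag, A.trace) :=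
  rfl

variable [DecidableEq ι]

lemma exists_mem_LJ_toHeisenberg_eq [Nonempty ι] (h : (ι → R) × (ι → R) × R) :
    ∃ X ∈ LJ ι R, toHeisenberg ι R X = h := by
  obtain ⟨p, q, c⟩ := h
  let z := Classical.arbitrary ι
  refine ⟨fromBlocks (single z z c) (diagonal p) (diagonal q) (single z z c)ᵀ,
    mem_LJ_iff.2 ⟨_, _, _, rfl, diagonal_transpose p, diagonal_transpose q⟩, ?_⟩
  rw [toHeisenberg_fromBlocks, diag_diagonal, diag_diagonal, trace_single_eq_same]

lemma toHeisenberg_eq_zero_iff {X : Matrix (ι ⊕ ι) (ι ⊕ ι) R} (hX : X ∈ LJ ι R) :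
    toHeisenberg ι R X = 0 ↔ X ∈ altBlocks (LinearMap.ker (traceLinearMap ι R R)) := by
  obtain ⟨A, B, C, rfl, hB, hC⟩ := mem_LJ_iff.1 hX
  simp only [toHeisenberg_fromBlocks, Prod.mk_eq_zero, funext_iff, diag_apply, Pi.zero_apply]
  constructor
  · rintro ⟨hB₀, hC₀, hA⟩
    exact ⟨A, B, C, rfl, ⟨hB, hB₀⟩, ⟨hC, hC₀⟩, hA⟩
  · rintro ⟨A', B', C', hABC, hB', hC', hA'⟩
    obtain ⟨rfl, rfl, rfl, -⟩ := fromBlocks_inj.1 hABC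
    exact ⟨hB'.2, hC'.2, hA'⟩

lemma toHeisenberg_commutator [CharP R 2] {X Y : Matrix (ι ⊕ ι) (ι ⊕ ι) R}
    (hX : X ∈ LJ ι R) (hY : Y ∈ LJ ι R) :
    toHeisenberg ι R (X * Y - Y * X) =
      (0, 0, (toHeisenberg ι R X).1 ⬝ᵥ (toHeisenberg ι R Y).2.1 -
        (toHeisenberg ι R Y).1 ⬝ᵥ (toHeisenberg ι R X).2.1) := by
  obtain ⟨A, B, C, rfl, hB, hC⟩ := mem_LJ_iff.1 hX
  obtain ⟨A', B', C', rfl, hB', hC'⟩ := mem_LJ_iff.1 hY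
  rw [fromBlocks_commutator hB hC hB' hC', toHeisenberg_fromBlocks, toHeisenberg_fromBlocks,
    toHeisenberg_fromBlocks]
  refine Prod.ext (funext fun i => ?_) (Prod.ext (funext fun i => ?_) ?_)
  · exact (add_mem (add_transpose_mem_alternating _) (add_transpose_mem_alternating _)).2 i
  · exact (add_mem (add_transpose_mem_alternating _) (add_transpose_mem_alternating _)).2 i
  · simp only [trace_add, trace_mul_comm A' A, CharTwo.add_self_eq_zero, zero_add,
      trace_mul_eq_sum_diag_mul_diag hB hC', trace_mul_eq_sum_diag_mul_diag hB' hC,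
      CharTwo.sub_eq_add]
    rfl

end Heisenberg

end SymplecticCharTwo

open SymplecticCharTwo in
/-- Characteristic 2: the derived and second derived algebras of the symplectic
Lie algebra `L(J)`, and the quotient `L(J)/L(J)⁽²⁾ ≅ h(n)` (the Heisenberg
Lie algebra of dimension `2n+1`, encoded concretely on
`(Fin n → F) × (Fin n → F) × F` with bracket `[(p,q,c),(p',q',c')] = (0,0,p⬝q'-p'⬝q)`). -/
theorem stmt_18 (F : Type*) [Field F] [CharP F 2] (n : ℕ) (hn : 1 ≤ n) :
    let J : Matrix (Fin n ⊕ Fin n) (Fin n ⊕ Fin n) F := Matrix.fromBlocks 0 1 1 0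
    let L : Set (Matrix (Fin n ⊕ Fin n) (Fin n ⊕ Fin n) F) := {X | Xᵀ * J = J * X}
    let D1 : Submodule F (Matrix (Fin n ⊕ Fin n) (Fin n ⊕ Fin n) F) :=
      Submodule.span F {Z | ∃ X ∈ L, ∃ Y ∈ L, Z = X * Y - Y * X}
    let D2 : Submodule F (Matrix (Fin n ⊕ Fin n) (Fin n ⊕ Fin n) F) :=
      Submodule.span F {Z | ∃ X ∈ D1, ∃ Y ∈ D1, Z = X * Y - Y * X}
    (∀ Z, Z ∈ D1 ↔ ∃ A B C : Matrix (Fin n) (Fin n) F,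
        Z = Matrix.fromBlocks A B C Aᵀ ∧
        (Bᵀ = B ∧ ∀ i, B i i = 0) ∧ (Cᵀ = C ∧ ∀ i, C i i = 0)) ∧
    (∀ Z, Z ∈ D2 ↔ ∃ A B C : Matrix (Fin n) (Fin n) F,
        Z = Matrix.fromBlocks A B C Aᵀ ∧
        (Bᵀ = B ∧ ∀ i, B i i = 0) ∧ (Cᵀ = C ∧ ∀ i, C i i = 0) ∧ A.trace = 0) ∧
    (∃ θ : Matrix (Fin n ⊕ Fin n) (Fin n ⊕ Fin n) F →ₗ[F]
        ((Fin n → F) × (Fin n → F) × F),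
      (∀ h : (Fin n → F) × (Fin n → F) × F, ∃ X ∈ L, θ X = h) ∧
      (∀ X ∈ L, (θ X = 0 ↔ X ∈ D2)) ∧
      (∀ X ∈ L, ∀ Y ∈ L, θ (X * Y - Y * X) =
        (0, 0, (θ X).1 ⬝ᵥ (θ Y).2.1 - (θ Y).1 ⬝ᵥ (θ X).2.1))) := by
  intro J L D1 D2
  have : Nonempty (Fin n) := ⟨⟨0, hn⟩⟩
  have hD1 : D1 = altBlocks ⊤ := commutatorSpan_LJ_eq
  have hD2 : D2 = altBlocks (LinearMap.ker (traceLinearMap (Fin n) F F)) := by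
    change commutatorSpan (D1 : Set (Matrix (Fin n ⊕ Fin n) (Fin n ⊕ Fin n) F)) = _
    rw [hD1, commutatorSpan_altBlocks_top_eq]
  refine ⟨fun Z => by rw [hD1, mem_altBlocks_top_iff]; rfl, fun Z => by rw [hD2]; rfl,
    toHeisenberg (Fin n) F, exists_mem_LJ_toHeisenberg_eq, fun X hX => ?_,
    fun X hX Y hY => toHeisenberg_commutator hX hY⟩
  rw [hD2]
  exact toHeisenberg_eq_zero_iff hX
end
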